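/- Let n ≥ 2, let A be a synchronizing core automaton over Fin n, let Φ be an automorphism of the underlying digraph of A, and let N ≥ 1. Suppose t ∈ Q_A is heavy for (A, Φ, N) with divisibility constant b, and let r be the orbit length of t under Φ. Then there exists M ≥ 1 such that: M divides the orbit length under Φ of every edge of A with target t; the lowest common multiple of M and b equals N; and M = m·r for some integer m > 1. -/
import Mathlib


/-- The one-sided shift map on `(Fin n)^ℕ`: `(σ x) i = x (i+1)`. -/
def shiftMap (n : ℕ) : (ℕ → Fin n) → (ℕ → Fin n) := fun x i => x (i + 1)

/-- `b` has orbit length exactly `N` under `f`: `N` is the least `L ≥ 1` with `f^[L] b = b`. -/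
def HasOrbitLen {β : Type*} (f : β → β) (b : β) (N : ℕ) : Prop :=
  IsLeast {L : ℕ | 0 < L ∧ f^[L] b = b} N

/-- An automorphism of the one-sided shift: a homeomorphism commuting with the shift. -/
def IsShiftAut (n : ℕ) (φ : (ℕ → Fin n) ≃ₜ (ℕ → Fin n)) : Prop :=
  ⇑φ ∘ shiftMap n = shiftMap n ∘ ⇑φ

/-- `φ` has finite order. -/
def FiniteOrderAut (n : ℕ) (φ : (ℕ → Fin n) ≃ₜ (ℕ → Fin n)) : Prop :=
  ∃ m : ℕ, 0 < m ∧ (⇑φ)^[m] = id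

/-- Extension of the transition function of an automaton to words (letters read in order). -/
def transStar {n : ℕ} {Q : Type*} (π : Fin n → Q → Q) : List (Fin n) → Q → Q
  | [], q => q
  | x :: w, q => transStar π w (π x q)

/-- The automaton `(Q, π)` is synchronizing at level `k` with synchronizing map `s`. -/
def SyncAtLevelWith {n : ℕ} {Q : Type*} (π : Fin n → Q → Q) (k : ℕ)
    (s : List (Fin n) → Q) : Prop :=
  ∀ w : List (Fin n), w.length = k → ∀ q : Q, transStar π w q = s w

/-- The synchronizing map `s` at level `k` is surjective (the automaton is core). -/
def CoreAt {n : ℕ} {Q : Type*} (s : List (Fin n) → Q) (k : ℕ) : Prop :=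
  ∀ q : Q, ∃ w : List (Fin n), w.length = k ∧ s w = q

/-- An automorphism of the underlying digraph of the automaton `(Q, π)`. -/
structure DigraphAut {Q : Type*} (n : ℕ) (π : Fin n → Q → Q) where
  α : Q ≃ Q
  lab : Q → Equiv.Perm (Fin n)
  compat : ∀ (x : Fin n) (q : Q), π (lab q x) (α q) = α (π x q)

/-- Action of a digraph automorphism on the edge set `Q × Fin n`. -/
def edgeMap {Q : Type*} {n : ℕ} {π : Fin n → Q → Q} (Φ : DigraphAut n π) :
    Q × Fin n → Q × Fin n :=
  fun e => (Φ.α e.1, Φ.lab e.1 e.2)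

/-- The output word map `Λ` of a digraph automorphism. -/
def outWord {Q : Type*} {n : ℕ} (π : Fin n → Q → Q) (lab : Q → Equiv.Perm (Fin n)) :
    List (Fin n) → Q → List (Fin n)
  | [], _ => []
  | x :: w, q => lab q x :: outWord π lab w (π x q)

/-- Action of a digraph automorphism on based circuits: `(q, w) ↦ (α q, Λ(w, q))`. -/
def circMap {Q : Type*} {n : ℕ} {π : Fin n → Q → Q} (Φ : DigraphAut n π) :
    Q × List (Fin n) → Q × List (Fin n) :=
  fun c => (Φ.α c.1, outWord π Φ.lab c.2 c.1)

/-- `(q, w)` is a based circuit: `w` nonempty and `π*(w, q) = q`. -/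
def IsBasedCircuit {Q : Type*} {n : ℕ} (π : Fin n → Q → Q) (c : Q × List (Fin n)) : Prop :=
  c.2 ≠ [] ∧ transStar π c.2 c.1 = c.1

/-- The sliding block code induced by an automaton synchronizing at level `k`
with synchronizing map `s` and digraph automorphism with labelling `lab`:
`(F x) i = lab q_i (x i)` where `q_i = s [x(i+k), x(i+k-1), …, x(i+1)]`. -/
def inducedMap {Q : Type*} {n : ℕ} (k : ℕ) (s : List (Fin n) → Q)
    (lab : Q → Equiv.Perm (Fin n)) : (ℕ → Fin n) → (ℕ → Fin n) :=
  fun x i => lab (s (List.ofFn fun j : Fin k => x (i + k - (j : ℕ)))) (x i)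

/-- `(A, Φ)` (with `A` synchronizing and core) is a support of the shift automorphism `φ`. -/
def IsSupport {Q : Type*} (n : ℕ) (π : Fin n → Q → Q) (Φ : DigraphAut n π)
    (φ : (ℕ → Fin n) ≃ₜ (ℕ → Fin n)) : Prop :=
  ∃ (k : ℕ) (s : List (Fin n) → Q), SyncAtLevelWith π k s ∧ CoreAt s k ∧
    inducedMap k s Φ.lab = ⇑φ

/-- The permutation automorphism of the shift induced by a permutation of `Fin n`. -/
def permAutMap {n : ℕ} (ρ : Equiv.Perm (Fin n)) : (ℕ → Fin n) → (ℕ → Fin n) :=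
  fun x i => ρ (x i)

/-- `t` is heavy for `(A, Φ, N)` with divisibility constant `b`. -/
def Heavy {Q : Type*} {n : ℕ} (π : Fin n → Q → Q) (Φ : DigraphAut n π)
    (N b : ℕ) (t : Q) : Prop :=
  b ∣ N ∧ b ≠ N ∧ (∀ r : ℕ, HasOrbitLen (⇑Φ.α) t r → r ∣ b) ∧
  ∀ (q : Q) (x : Fin n), π x q = t →
    ∀ L : ℕ, HasOrbitLen (edgeMap Φ) (q, x) L → Nat.lcm L b = N


/-- Distributivity of `lcm` over `gcd` in `ℕ` (for nonzero arguments). -/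
lemma nat_lcm_gcd_distrib {a b c : ℕ} (ha : a ≠ 0) (hb : b ≠ 0) (hc : c ≠ 0) :
    Nat.lcm (Nat.gcd a b) c = Nat.gcd (Nat.lcm a c) (Nat.lcm b c) := by
  have hg : Nat.gcd a b ≠ 0 := fun h => ha (Nat.eq_zero_of_gcd_eq_zero_left h)
  have hl1 : Nat.lcm a c ≠ 0 := Nat.lcm_ne_zero ha hc
  have hl2 : Nat.lcm b c ≠ 0 := Nat.lcm_ne_zero hb hc
  apply Nat.dvd_antisymm
  · exact Nat.dvd_gcd
      (Nat.lcm_dvd ((Nat.gcd_dvd_left a b).trans (Nat.dvd_lcm_left a c)) (Nat.dvd_lcm_right a c))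
      (Nat.lcm_dvd ((Nat.gcd_dvd_right a b).trans (Nat.dvd_lcm_left b c)) (Nat.dvd_lcm_right b c))
  · have hgg : Nat.gcd (Nat.lcm a c) (Nat.lcm b c) ≠ 0 :=
      fun h => hl1 (Nat.eq_zero_of_gcd_eq_zero_left h)
    have hll : Nat.lcm (Nat.gcd a b) c ≠ 0 := Nat.lcm_ne_zero hg hc
    rw [← Nat.factorization_le_iff_dvd hgg hll, Nat.factorization_gcd hl1 hl2,
      Nat.factorization_lcm ha hc, Nat.factorization_lcm hb hc,
      Nat.factorization_lcm hg hc, Nat.factorization_gcd ha hb]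
    intro p
    simp only [Finsupp.inf_apply, Finsupp.sup_apply]
    exact le_of_eq (sup_inf_right _ _ _).symm

/-- `lcm` of a `Finset.gcd` with a fixed `b`, when every value has the same `lcm` with `b`. -/
lemma nat_lcm_finset_gcd {β : Type*} [DecidableEq β] {S : Finset β} (f : β → ℕ) {b N : ℕ}
    (hb : b ≠ 0) (hS : S.Nonempty) (hpos : ∀ e ∈ S, f e ≠ 0)
    (h : ∀ e ∈ S, Nat.lcm (f e) b = N) :
    Nat.lcm (S.gcd f) b = N := by
  induction hS using Finset.Nonempty.cons_induction with
  | singleton a => simpa using h a (by simp)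
  | cons a s ha hs ih =>
    have hG : s.gcd f ≠ 0 := by
      obtain ⟨e, he⟩ := hs
      intro h0
      exact hpos e (by simp [he]) (zero_dvd_iff.mp (h0 ▸ Finset.gcd_dvd he))
    have hfa : f a ≠ 0 := hpos a (by simp)
    have ihs : Nat.lcm (s.gcd f) b = N :=
      ih (fun e he => hpos e (by simp [he])) (fun e he => h e (by simp [he]))
    rw [Finset.cons_eq_insert, Finset.gcd_insert]
    show Nat.lcm (Nat.gcd (f a) (s.gcd f)) b = N
    rw [nat_lcm_gcd_distrib hfa hG hb, ihs, h a (by simp)]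
    exact Nat.gcd_self N

/-- Every point of a permutation of a finite type has an orbit length, namely
its minimal period. -/
lemma hasOrbitLen_minimalPeriod {β : Type*} [Finite β] (g : Equiv.Perm β) (x : β) :
    HasOrbitLen (⇑g) x (Function.minimalPeriod (⇑g) x) := by
  have hp : Function.IsPeriodicPt (⇑g) (orderOf g) x := by
    show (⇑g)^[orderOf g] x = x
    rw [Equiv.Perm.iterate_eq_pow, pow_orderOf_eq_one]
    rfl
  have hpos := hp.minimalPeriod_pos (orderOf_pos g)
  exact ⟨⟨hpos, Function.isPeriodicPt_minimalPeriod (⇑g) x⟩,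
    fun L hL => Function.IsPeriodicPt.minimalPeriod_le hL.1 hL.2⟩

lemma transStar_append {n : ℕ} {Q : Type*} (π : Fin n → Q → Q) (u v : List (Fin n)) (q : Q) :
    transStar π (u ++ v) q = transStar π v (transStar π u q) := by
  induction u generalizing q with
  | nil => rfl
  | cons x u ih => simp [transStar, ih]

theorem valid_splitting_length_exists (n : ℕ) (hn : 2 ≤ n)
    (Q : Type) [Fintype Q] [Nonempty Q] (π : Fin n → Q → Q)
    (k : ℕ) (s : List (Fin n) → Q)
    (hsync : SyncAtLevelWith π k s) (hcore : CoreAt s k)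
    (Φ : DigraphAut n π) (N : ℕ) (hN : 1 ≤ N)
    (t : Q) (b : ℕ) (hheavy : Heavy π Φ N b t)
    (r : ℕ) (hr : HasOrbitLen (⇑Φ.α) t r) :
    ∃ M : ℕ, 1 ≤ M ∧
      (∀ (q : Q) (x : Fin n), π x q = t →
        ∀ L : ℕ, HasOrbitLen (edgeMap Φ) (q, x) L → M ∣ L) ∧
      Nat.lcm M b = N ∧ ∃ m : ℕ, 1 < m ∧ M = m * r := by
  classical
  set f : Q × Fin n → Q × Fin n := edgeMap Φ with hf
  have f_eq : f = ⇑(Equiv.prodShear Φ.α Φ.lab) := rfl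
  have horb : ∀ e : Q × Fin n, HasOrbitLen f e (Function.minimalPeriod f e) := by
    intro e; rw [f_eq]; exact hasOrbitLen_minimalPeriod _ e
  have horbA : HasOrbitLen (⇑Φ.α) t (Function.minimalPeriod (⇑Φ.α) t) :=
    hasOrbitLen_minimalPeriod (show Equiv.Perm Q from Φ.α) t
  have hr_eq : r = Function.minimalPeriod (⇑Φ.α) t := hr.unique horbA
  have hrpos : 0 < r := hr.1.1
  -- target of the iterated edge map
  have htgt : ∀ (L : ℕ) (e : Q × Fin n), π (f^[L] e).2 (f^[L] e).1 = (⇑Φ.α)^[L] (π e.2 e.1) := by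
    intro L
    induction L with
    | zero => intro e; rfl
    | succ L ih =>
      intro e
      rw [Function.iterate_succ_apply', Function.iterate_succ_apply']
      show π (Φ.lab (f^[L] e).1 (f^[L] e).2) (Φ.α (f^[L] e).1) = Φ.α ((⇑Φ.α)^[L] (π e.2 e.1))
      rw [Φ.compat, ih e]
  -- the set of edges with target t
  set S : Finset (Q × Fin n) := Finset.univ.filter (fun e => π e.2 e.1 = t) with hSdef
  have hmemS : ∀ e : Q × Fin n, e ∈ S ↔ π e.2 e.1 = t := by
    intro e; simp [hSdef]
  -- S is nonempty (core + synchronizing)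
  have hSne : S.Nonempty := by
    obtain ⟨w, hw, hwt⟩ := hcore t
    obtain ⟨q0⟩ := (inferInstance : Nonempty Q)
    have hz : (0 : ℕ) < n := by omega
    set z : Fin n := ⟨0, hz⟩
    have h2 : transStar π (z :: w) q0 = t := by
      show transStar π w (π z q0) = t
      rw [hsync w hw]; exact hwt
    rcases List.eq_nil_or_concat (z :: w) with h | ⟨u, y, huy⟩
    · simp at h
    · rw [huy, List.concat_eq_append, transStar_append] at h2
      exact ⟨(transStar π u q0, y), (hmemS _).mpr h2⟩
  set M : ℕ := S.gcd (fun e => Function.minimalPeriod f e) with hM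
  -- each orbit length of an edge in S has lcm N with b
  have hb0 : b ≠ 0 := by
    rintro rfl
    have := hheavy.1
    rw [Nat.zero_dvd] at this
    omega
  have hNeq : ∀ e ∈ S, Nat.lcm (Function.minimalPeriod f e) b = N := by
    rintro ⟨q, x⟩ he
    exact hheavy.2.2.2 q x ((hmemS _).mp he) _ (horb (q, x))
  have hposS : ∀ e ∈ S, Function.minimalPeriod f e ≠ 0 := fun e _ => (horb e).1.1.ne'
  have hlcm : Nat.lcm M b = N := nat_lcm_finset_gcd _ hb0 hSne hposS hNeq
  -- r divides M
  have hrM : r ∣ M := by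
    apply Finset.dvd_gcd
    intro e he
    have hper : f^[Function.minimalPeriod f e] e = e := Function.isPeriodicPt_minimalPeriod f e
    have : (⇑Φ.α)^[Function.minimalPeriod f e] t = t := by
      have := htgt (Function.minimalPeriod f e) e
      rw [hper, (hmemS e).mp he] at this
      exact this.symm
    rw [hr_eq]
    exact Function.IsPeriodicPt.minimalPeriod_dvd this
  -- M is positive
  have hMpos : 0 < M := by
    obtain ⟨e, he⟩ := hSne
    have := Finset.gcd_dvd he (f := fun e => Function.minimalPeriod f e)
    rcases Nat.eq_zero_or_pos M with h0 | h
    · exact absurd (zero_dvd_iff.mp (h0 ▸ this)) (hposS e he)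
    · exact h
  -- M ≠ r
  have hMne : M ≠ r := by
    intro hMr
    have hrb : r ∣ b := hheavy.2.2.1 r hr
    have : Nat.lcm M b = b := Nat.dvd_antisymm (Nat.lcm_dvd (hMr ▸ hrb) dvd_rfl) (Nat.dvd_lcm_right _ _)
    exact hheavy.2.1 (this ▸ hlcm)
  refine ⟨M, hMpos, ?_, hlcm, M / r, ?_, (Nat.div_mul_cancel hrM).symm⟩
  · intro q x hqx L hL
    have hLeq : L = Function.minimalPeriod f (q, x) := hL.unique (horb (q, x))
    rw [hLeq]
    exact Finset.gcd_dvd ((hmemS (q, x)).mpr hqx)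
  · have h1 : M / r ≠ 0 := by
      intro h0
      have := Nat.div_mul_cancel hrM
      rw [h0, zero_mul] at this
      omega
    have h2 : M / r ≠ 1 := by
      intro h1'
      have := Nat.div_mul_cancel hrM
      rw [h1', one_mul] at this
      exact hMne this.symm
    exact lt_of_le_of_ne (Nat.one_le_iff_ne_zero.mpr h1) (Ne.symm h2)
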